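/- arXiv:2208.07567 — 5 statements merged into one kernel-verified Lean document; each statement's English description precedes it below -/
import Mathlib

section
/- Let T be a triangle in ℝ² with vertices v, w, x, such that each of the three sides of T intersects the closed unit disk centered at the origin. If the interior angle of T at v is at least π/3, then v is at distance at most 2 from the origin. -/
open MeasureTheory Metric Set
noncomputable section
abbrev E2 := EuclideanSpace ℝ (Fin 2)

/-!
Take points `p ∈ [v, w]` and `q ∈ [x, v]` in the unit disk; for `p, q ≠ v` the angle `∠ p v q`
is the angle of the triangle at `v`. By the triangle inequality for angles, the ray from `v`
to the origin leaves at least `π / 6` on one side, say `∠ p v 0 ≥ π / 6`. If this angle is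
obtuse then `‖v‖ ≤ ‖p‖`; otherwise the law of sines gives `‖v‖ sin (∠ p v 0) ≤ ‖p‖`
with `sin (∠ p v 0) ≥ 1 / 2`.
-/

open EuclideanGeometry Real

section

variable {V P : Type*} [NormedAddCommGroup V] [InnerProductSpace ℝ V] [MetricSpace P]
  [NormedAddTorsor V P]

theorem dist_le_dist_of_pi_div_two_le_angle {p v c : P} (h : π / 2 ≤ ∠ p v c) :
    dist v c ≤ dist p c := by
  have hcos : cos (∠ p v c) ≤ 0 :=
    cos_nonpos_of_pi_div_two_le_of_le h (by linarith [angle_le_pi p v c, pi_pos])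
  have hcos_law := law_cos p v c
  rw [dist_comm c v] at hcos_law
  have : 0 ≤ dist p v * dist v c * -cos (∠ p v c) :=
    mul_nonneg (mul_nonneg dist_nonneg dist_nonneg) (neg_nonneg.2 hcos)
  nlinarith [dist_nonneg (x := p) (y := c), dist_nonneg (x := v) (y := c)]

theorem dist_le_two_mul_dist_of_pi_div_six_le_angle {p v c : P} (h : π / 6 ≤ ∠ p v c) :
    dist v c ≤ 2 * dist p c := by
  rcases le_or_gt (π / 2) (∠ p v c) with hobtuse | hacute
  · linarith [dist_le_dist_of_pi_div_two_le_angle hobtuse, dist_nonneg (x := p) (y := c)]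
  · have hsin : 1 / 2 ≤ sin (∠ p v c) := by
      rw [← sin_pi_div_six]
      exact sin_le_sin_of_le_of_le_pi_div_two (by linarith [pi_pos]) hacute.le h
    have hsin_law := law_sin p v c
    rw [dist_comm c p] at hsin_law
    nlinarith [sin_le_one (∠ c p v), dist_nonneg (x := p) (y := c), dist_nonneg (x := v) (y := c)]

theorem dist_le_two_mul_of_pi_div_three_le_angle {p q v c : P} {r : ℝ} (hp : dist p c ≤ r)
    (hq : dist q c ≤ r) (h : π / 3 ≤ ∠ p v q) : dist v c ≤ 2 * r := by
  have hsplit := angle_le_angle_add_angle v p c q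
  rcases le_or_gt (π / 6) (∠ p v c) with hpc | hpc
  · linarith [dist_le_two_mul_dist_of_pi_div_six_le_angle hpc]
  · have hqc : π / 6 ≤ ∠ q v c := by rw [angle_comm]; linarith
    linarith [dist_le_two_mul_dist_of_pi_div_six_le_angle hqc]

end

theorem stmt9_general (v w x : E2)
    (h1 : (segment ℝ v w ∩ closedBall (0 : E2) 1).Nonempty)
    (h3 : (segment ℝ x v ∩ closedBall (0 : E2) 1).Nonempty)
    (hang : Real.pi / 3 ≤ EuclideanGeometry.angle w v x) :
    ‖v‖ ≤ 2 := by
  obtain ⟨p, hpvw, hp⟩ := h1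
  obtain ⟨q, hqxv, hq⟩ := h3
  rw [mem_closedBall] at hp hq
  rcases eq_or_ne p v with rfl | hpv
  · rw [dist_zero_right] at hp
    linarith
  rcases eq_or_ne q v with rfl | hqv
  · rw [dist_zero_right] at hq
    linarith
  have hpq : ∠ p v q = ∠ w v x := by
    rw [(mem_segment_iff_wbtw.1 hpvw).angle_eq_left q hpv,
      (mem_segment_iff_wbtw.1 hqxv).symm.angle_eq_right w hqv]
  simpa only [dist_zero_right, mul_one] using
    dist_le_two_mul_of_pi_div_three_le_angle hp hq (hpq ▸ hang)

theorem stmt9 (v w x : E2)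
    (h1 : (segment ℝ v w ∩ closedBall (0 : E2) 1).Nonempty)
    (h2 : (segment ℝ w x ∩ closedBall (0 : E2) 1).Nonempty)
    (h3 : (segment ℝ x v ∩ closedBall (0 : E2) 1).Nonempty)
    (hang : Real.pi / 3 ≤ EuclideanGeometry.angle w v x) :
    ‖v‖ ≤ 2 :=
  stmt9_general v w x h1 h3 hang
end
end

section
/- Let P be a convex polygon in ℝ² containing the closed unit disk centered at the origin. Then at most two vertices of P whose pairwise-separating boundary arcs each contain a point of the unit disk can be at distance strictly greater than 2 from the origin. More precisely: there do not exist three points v, w, x in P, each at distance strictly greater than 2 from the origin, such that every side of the triangle vwx intersects the unit disk. -/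
/-!
Seen from a point at distance more than `2ρ` from its centre, a disk of radius `ρ` subtends an
angle less than `π / 3`. If every side of a triangle meets the disk, the angle at each vertex lies
between two rays through points of the disk, so a triangle with all three vertices that far out
would have angle sum less than `π`.
-/

open MeasureTheory Metric Set
noncomputable section

namespace EuclideanGeometry

open Real

variable {V P : Type*} [NormedAddCommGroup V] [InnerProductSpace ℝ V] [MetricSpace P]
  [NormedAddTorsor V P]

-- The law of cosines makes the angle acute, and the law of sines bounds its sine by
-- `dist p c / dist v c < 1 / 2`.
theorem angle_lt_pi_div_six_of_two_mul_dist_lt {p v c : P} (h : 2 * dist p c < dist v c) :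
    ∠ p v c < π / 6 := by
  have hcos : 0 < cos (∠ p v c) := by
    by_contra! hle
    have hlaw := law_cos p v c
    rw [dist_comm c v] at hlaw
    have : 2 * dist p v * dist v c * cos (∠ p v c) ≤ 0 :=
      mul_nonpos_of_nonneg_of_nonpos (by positivity) hle
    nlinarith [dist_nonneg (x := p) (y := c)]
  have hacute : ∠ p v c < π / 2 := by
    by_contra! h'
    exact hcos.not_ge (cos_nonpos_of_pi_div_two_le_of_le h' (by linarith [angle_le_pi p v c]))
  have hsin : sin (∠ p v c) * dist v c ≤ dist p c := by
    rw [law_sin, dist_comm c p]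
    exact mul_le_of_le_one_left dist_nonneg (sin_le_one _)
  by_contra! h'
  have := sin_le_sin_of_le_of_le_pi_div_two (by linarith [pi_pos]) hacute.le h'
  rw [sin_pi_div_six] at this
  nlinarith [dist_nonneg (x := p) (y := c)]

theorem angle_lt_pi_div_three_of_two_mul_dist_lt {p r v c : P} (hp : 2 * dist p c < dist v c)
    (hr : 2 * dist r c < dist v c) : ∠ p v r < π / 3 := by
  have hpvc := angle_lt_pi_div_six_of_two_mul_dist_lt hp
  have hrvc := angle_lt_pi_div_six_of_two_mul_dist_lt hr
  rw [angle_comm] at hrvc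
  linarith [angle_le_angle_add_angle v p c r]

theorem angle_lt_pi_div_three_of_wbtw {v w x p r c : P} (hp : Wbtw ℝ v p w) (hr : Wbtw ℝ v r x)
    (hpc : 2 * dist p c < dist v c) (hrc : 2 * dist r c < dist v c) : ∠ w v x < π / 3 := by
  have hpv : p ≠ v := by rintro rfl; linarith [dist_nonneg (x := p) (y := c)]
  have hrv : r ≠ v := by rintro rfl; linarith [dist_nonneg (x := r) (y := c)]
  rw [← hp.angle_eq_left x hpv, ← hr.angle_eq_right p hrv]
  exact angle_lt_pi_div_three_of_two_mul_dist_lt hpc hrc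

theorem not_forall_two_mul_lt_dist_of_sides_meet_closedBall {v w x p q r c : P} {ρ : ℝ}
    (hp : Wbtw ℝ v p w) (hq : Wbtw ℝ w q x) (hr : Wbtw ℝ x r v)
    (hpc : dist p c ≤ ρ) (hqc : dist q c ≤ ρ) (hrc : dist r c ≤ ρ) :
    ¬ (2 * ρ < dist v c ∧ 2 * ρ < dist w c ∧ 2 * ρ < dist x c) := by
  rintro ⟨hv, hw, hx⟩
  have hwv : w ≠ v := by
    rintro rfl
    rw [wbtw_self_iff] at hp
    subst hp
    linarith [dist_nonneg (x := p) (y := c)]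
  have hv' := angle_lt_pi_div_three_of_wbtw hp hr.symm (by linarith) (by linarith)
  have hw' := angle_lt_pi_div_three_of_wbtw hp.symm hq (by linarith) (by linarith)
  have hx' := angle_lt_pi_div_three_of_wbtw hq.symm hr (by linarith) (by linarith)
  rw [angle_comm] at hv'
  linarith [angle_add_angle_add_angle_eq_pi x hwv]

end EuclideanGeometry

theorem stmt10_general (P : Set E2) :
    ¬ ∃ v ∈ P, ∃ w ∈ P, ∃ x ∈ P, 2 < ‖v‖ ∧ 2 < ‖w‖ ∧ 2 < ‖x‖ ∧
      (segment ℝ v w ∩ closedBall (0 : E2) 1).Nonempty ∧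
      (segment ℝ w x ∩ closedBall (0 : E2) 1).Nonempty ∧
      (segment ℝ x v ∩ closedBall (0 : E2) 1).Nonempty := by
  rintro ⟨v, -, w, -, x, -, hv, hw, hx, ⟨p, hp, hpc⟩, ⟨q, hq, hqc⟩, ⟨r, hr, hrc⟩⟩
  rw [mem_segment_iff_wbtw] at hp hq hr
  rw [mem_closedBall] at hpc hqc hrc
  rw [← dist_zero_right] at hv hw hx
  exact EuclideanGeometry.not_forall_two_mul_lt_dist_of_sides_meet_closedBall hp hq hr hpc hqc hrc
    ⟨by linarith, by linarith, by linarith⟩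

theorem stmt10 (P : Set E2) (hP : Convex ℝ P) (hball : closedBall (0 : E2) 1 ⊆ P) :
    ¬ ∃ v ∈ P, ∃ w ∈ P, ∃ x ∈ P, 2 < ‖v‖ ∧ 2 < ‖w‖ ∧ 2 < ‖x‖ ∧
      (segment ℝ v w ∩ closedBall (0 : E2) 1).Nonempty ∧
      (segment ℝ w x ∩ closedBall (0 : E2) 1).Nonempty ∧
      (segment ℝ x v ∩ closedBall (0 : E2) 1).Nonempty :=
  stmt10_general P
end
end

section
/- Let O be a finite family of convex polygons in ℝ² whose vertices all have integer coordinates in {0,…,N}². Let P_opt be a minimum-area convex polygon intersecting every member of O. If area(P_opt) > 0, then area(P_opt) ≥ c/N⁸ for some absolute constant c > 0. -/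
/-!
If the optimal polygon `P` has positive area, no line meets every polygon: otherwise points of
the polygons on such a line span a competitor of area zero. So for every direction `u` some
polygon lies strictly beyond another one in direction `u`, and the largest such gap `g u` is a
max-min of the linear forms `⟪u, p - q⟫` over differences of vertices, positive on the unit
circle. At a minimum `u` of `g` on the circle, two distinct vertex differences `d ≠ d'` lie on the
line `⟪u, ·⟫ = γ`; they are integer vectors with `‖d - d'‖ ≤ 2√2 N`, and
`γ ‖d - d'‖ = |det (d - d', d)| ≥ 1`. As `P` meets every polygon, its width in every direction is
at least `γ ≥ 1 / (2√2 N)`, and a convex set of minimal width `η` contains a triangle of area at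
least `η² / 8`.
-/

open MeasureTheory Metric Set
noncomputable section

/-- `p` is a point of the integer grid `{0, …, N}²`. -/
def isGrid (N : ℕ) (p : E2) : Prop := ∀ i : Fin 2, ∃ m : ℕ, m ≤ N ∧ p i = (m : ℝ)

open scoped RealInnerProductSpace Topology Pointwise

namespace PolygonTransversal

section MaxMin

variable {F : Type*} [NormedAddCommGroup F] [InnerProductSpace ℝ F]
  {K : Type*} [Fintype K] [Nonempty K] {L : K → Type*} [∀ k, Fintype (L k)] [∀ k, Nonempty (L k)]
  (d : (k : K) → L k → F)

def maxMinInner (u : F) : ℝ :=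
  Finset.univ.sup' Finset.univ_nonempty fun k =>
    Finset.univ.inf' Finset.univ_nonempty fun l => ⟪u, d k l⟫

theorem continuous_maxMinInner : Continuous (maxMinInner d) :=
  Continuous.finset_sup'_apply _ fun _ _ =>
    Continuous.finset_inf'_apply _ fun _ _ => continuous_id.inner continuous_const

theorem maxMinInner_smul {c : ℝ} (hc : 0 < c) (u : F) :
    maxMinInner d (c • u) = c * maxMinInner d u := by
  simp only [maxMinInner, real_inner_smul_left]
  have hsup := map_finset_sup' (OrderIso.mulLeft₀ c hc) Finset.univ_nonempty
    fun k => Finset.univ.inf' Finset.univ_nonempty fun l => ⟪u, d k l⟫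
  have hinf k := map_finset_inf' (OrderIso.mulLeft₀ c hc) Finset.univ_nonempty
    fun l => ⟪u, d k l⟫
  simp only [OrderIso.mulLeft₀_apply, Function.comp_def] at hsup hinf
  simp only [hsup, hinf]

theorem mul_norm_le_maxMinInner {γ : ℝ} (h : ∀ u ∈ sphere (0 : F) 1, γ ≤ maxMinInner d u)
    (v : F) : γ * ‖v‖ ≤ maxMinInner d v := by
  rcases eq_or_ne v 0 with rfl | hv
  · simp [maxMinInner]
  have hv' : 0 < ‖v‖ := norm_pos_iff.2 hv
  calc γ * ‖v‖ ≤ maxMinInner d (‖v‖⁻¹ • v) * ‖v‖ := by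
        gcongr
        exact h _ (by simp [norm_smul, hv'.ne'])
    _ = maxMinInner d v := by
        rw [mul_comm, ← maxMinInner_smul d hv', smul_inv_smul₀ hv'.ne']

theorem exists_forall_maxMinInner_le_inner (u : F) :
    ∃ k, ∀ l, maxMinInner d u ≤ ⟪u, d k l⟫ := by
  obtain ⟨k, -, hk⟩ := Finset.exists_mem_eq_sup' Finset.univ_nonempty
    fun k => Finset.univ.inf' Finset.univ_nonempty fun l => ⟪u, d k l⟫
  exact ⟨k, fun l => hk.le.trans (Finset.inf'_le _ (Finset.mem_univ l))⟩

theorem exists_inner_le_maxMinInner (u : F) (k : K) : ∃ l, ⟪u, d k l⟫ ≤ maxMinInner d u := by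
  obtain ⟨l, -, hl⟩ := Finset.exists_mem_eq_inf' Finset.univ_nonempty fun l => ⟪u, d k l⟫
  exact ⟨l, hl ▸ Finset.le_sup' (fun k => Finset.univ.inf' Finset.univ_nonempty
    fun l => ⟪u, d k l⟫) (Finset.mem_univ k)⟩

theorem one_lt_norm_add_smul {u w : F} (hu : ‖u‖ = 1) (hw : w ≠ 0) (huw : ⟪u, w⟫ = 0) {τ : ℝ}
    (hτ : τ ≠ 0) : 1 < ‖u + τ • w‖ := by
  have hsq : ‖u + τ • w‖ ^ 2 = 1 + τ ^ 2 * ‖w‖ ^ 2 := by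
    rw [norm_add_sq_real, real_inner_smul_right, huw, hu, norm_smul, Real.norm_eq_abs, mul_pow,
      sq_abs]
    ring
  have : 0 < τ ^ 2 * ‖w‖ ^ 2 := by positivity
  nlinarith [norm_nonneg (u + τ • w)]

/-- Tilting `u` to `u + τ w` does not raise `⟪·, d k l⟫` on the level `γ`, while
`‖u + τ w‖ > 1`; the values below `γ` stay below it for small `τ > 0`. -/
theorem exists_maxMinInner_lt_mul_norm {u w : F} (hu : ‖u‖ = 1) (hw : w ≠ 0)
    (huw : ⟪u, w⟫ = 0) (hpos : 0 < maxMinInner d u)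
    (hlevel : ∀ k l, ⟪u, d k l⟫ = maxMinInner d u → ⟪w, d k l⟫ ≤ 0) :
    ∃ v, maxMinInner d v < maxMinInner d u * ‖v‖ := by
  set γ := maxMinInner d u
  have hev : ∀ k, ∀ᶠ τ in 𝓝[>] (0 : ℝ), Finset.univ.inf' Finset.univ_nonempty
      (fun l => ⟪u + τ • w, d k l⟫) < γ * ‖u + τ • w‖ := by
    intro k
    obtain ⟨l, -, hl⟩ := Finset.exists_mem_eq_inf' Finset.univ_nonempty fun l => ⟪u, d k l⟫
    obtain ⟨l', hl'⟩ := exists_inner_le_maxMinInner d u k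
    have hle : ⟪u, d k l⟫ ≤ γ := hl ▸ (Finset.inf'_le _ (Finset.mem_univ l')).trans hl'
    rcases hle.lt_or_eq with hlt | heq
    · have hcont : Continuous fun τ : ℝ => γ * ‖u + τ • w‖ -
          Finset.univ.inf' Finset.univ_nonempty (fun l => ⟪u + τ • w, d k l⟫) := by fun_prop
      have h0 : 0 < γ * ‖u + (0 : ℝ) • w‖ -
          Finset.univ.inf' Finset.univ_nonempty (fun l => ⟪u + (0 : ℝ) • w, d k l⟫) := by
        rw [zero_smul, add_zero, hu, mul_one, hl]; linarith
      filter_upwards [nhdsWithin_le_nhds ((hcont.tendsto 0).eventually (lt_mem_nhds h0))]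
        with τ hτ using sub_pos.1 hτ
    · filter_upwards [self_mem_nhdsWithin] with τ (hτ : 0 < τ)
      calc Finset.univ.inf' Finset.univ_nonempty (fun l => ⟪u + τ • w, d k l⟫)
          ≤ ⟪u + τ • w, d k l⟫ := Finset.inf'_le _ (Finset.mem_univ l)
        _ = γ + τ * ⟪w, d k l⟫ := by rw [inner_add_left, real_inner_smul_left, heq]
        _ ≤ γ := by nlinarith [hlevel k l heq]
        _ < γ * ‖u + τ • w‖ := lt_mul_of_one_lt_right hpos (one_lt_norm_add_smul hu hw huw hτ.ne')
  obtain ⟨τ, hτ⟩ := (Filter.eventually_all.2 hev).exists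
  exact ⟨u + τ • w, Finset.sup'_lt_iff _ |>.2 fun k _ => hτ k⟩

theorem exists_ne_inner_eq_maxMinInner {u w : F} (hu : ‖u‖ = 1) (hw : w ≠ 0) (huw : ⟪u, w⟫ = 0)
    (hpos : 0 < maxMinInner d u) (hmin : ∀ v, maxMinInner d u * ‖v‖ ≤ maxMinInner d v) :
    ∃ k l k' l', d k l ≠ d k' l' ∧ ⟪u, d k l⟫ = maxMinInner d u ∧
      ⟪u, d k' l'⟫ = maxMinInner d u := by
  obtain ⟨k₀, hk₀⟩ := exists_forall_maxMinInner_le_inner d u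
  obtain ⟨l₀, hl₀⟩ := exists_inner_le_maxMinInner d u k₀
  replace hl₀ := le_antisymm hl₀ (hk₀ l₀)
  by_contra! huniq
  have hlevel : ∀ k l, ⟪u, d k l⟫ = maxMinInner d u → d k l = d k₀ l₀ := fun k l h =>
    not_not.1 fun hne => huniq k l k₀ l₀ hne h hl₀
  obtain ⟨v, hv⟩ : ∃ v, maxMinInner d v < maxMinInner d u * ‖v‖ := by
    rcases le_total ⟪w, d k₀ l₀⟫ 0 with h | h
    · exact exists_maxMinInner_lt_mul_norm d hu hw huw hpos fun k l hkl => hlevel k l hkl ▸ h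
    · refine exists_maxMinInner_lt_mul_norm d hu (neg_ne_zero.2 hw)
        (by rw [inner_neg_right, huw, neg_zero]) hpos fun k l hkl => ?_
      rw [hlevel k l hkl, inner_neg_left]
      linarith
  exact (hmin v).not_gt hv

end MaxMin

theorem inner_eq_fin_two (x y : E2) : ⟪x, y⟫ = x 0 * y 0 + x 1 * y 1 := by
  simp [PiLp.inner_apply, Fin.sum_univ_two, mul_comm]

theorem norm_sq_eq_fin_two (x : E2) : ‖x‖ ^ 2 = x 0 ^ 2 + x 1 ^ 2 := by
  rw [← real_inner_self_eq_norm_sq, inner_eq_fin_two]; ring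

def rot (x : E2) : E2 := !₂[-x 1, x 0]

theorem inner_rot_left (x y : E2) : ⟪rot x, y⟫ = x 0 * y 1 - x 1 * y 0 := by
  simp only [rot, inner_eq_fin_two, Matrix.cons_val_zero, Matrix.cons_val_one,
    Matrix.cons_val_fin_one]
  ring

theorem inner_rot_self (x : E2) : ⟪x, rot x⟫ = 0 := by
  rw [real_inner_comm, inner_rot_left]; ring

theorem norm_rot (x : E2) : ‖rot x‖ = ‖x‖ := by
  have h : ‖rot x‖ ^ 2 = ‖x‖ ^ 2 := by
    simp only [rot, norm_sq_eq_fin_two, Matrix.cons_val_zero, Matrix.cons_val_one,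
      Matrix.cons_val_fin_one]
    ring
  exact (sq_eq_sq₀ (norm_nonneg _) (norm_nonneg _)).1 h

theorem inner_mul_norm_sq_eq_inner_rot_sq {u e : E2} (hu : ‖u‖ = 1) (hue : ⟪u, e⟫ = 0)
    (z : E2) : (⟪u, z⟫ * ‖e‖) ^ 2 = ⟪rot e, z⟫ ^ 2 := by
  have hu2 : u 0 ^ 2 + u 1 ^ 2 = 1 := by rw [← norm_sq_eq_fin_two, hu, one_pow]
  rw [inner_eq_fin_two] at hue
  rw [mul_pow, norm_sq_eq_fin_two, inner_eq_fin_two, inner_rot_left]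
  -- `e = q • rot u`
  set q := u 0 * e 1 - u 1 * e 0
  have hrot : e 0 * z 1 - e 1 * z 0 = -(q * (u 0 * z 0 + u 1 * z 1)) := by
    linear_combination (-(e 0 * z 1 - e 1 * z 0)) * hu2 + (u 0 * z 1 - u 1 * z 0) * hue
  have hnorm : e 0 ^ 2 + e 1 ^ 2 = q ^ 2 := by
    linear_combination (-(e 0 ^ 2 + e 1 ^ 2)) * hu2 + (u 0 * e 0 + u 1 * e 1) * hue
  rw [hrot, hnorm]
  ring

theorem one_le_abs_inner_mul_norm_sub {u d d' : E2} (hu : ‖u‖ = 1)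
    (hd : ∀ i, ∃ m : ℤ, d i = m) (hd' : ∀ i, ∃ m : ℤ, d' i = m) (hne : d ≠ d')
    (h : ⟪u, d⟫ = ⟪u, d'⟫) (h0 : ⟪u, d⟫ ≠ 0) : 1 ≤ |⟪u, d⟫| * ‖d - d'‖ := by
  set e := d - d'
  have hsq := inner_mul_norm_sq_eq_inner_rot_sq (e := e) hu
    (by rw [inner_sub_right, h, sub_self]) d
  have habs : |⟪u, d⟫| * ‖e‖ = |⟪rot e, d⟫| := by
    rw [← abs_norm, ← abs_mul]; exact (sq_eq_sq_iff_abs_eq_abs _ _).1 hsq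
  obtain ⟨a, ha⟩ := hd 0
  obtain ⟨b, hb⟩ := hd 1
  obtain ⟨a', ha'⟩ := hd' 0
  obtain ⟨b', hb'⟩ := hd' 1
  have hint : ⟪rot e, d⟫ = ((a - a') * b - (b - b') * a : ℤ) := by
    simp [inner_rot_left, e, ha, hb, ha', hb']
  have hne0 : (a - a') * b - (b - b') * a ≠ 0 := by
    intro hz
    rw [hz, Int.cast_zero] at hint
    rw [hint, abs_zero] at habs
    exact (mul_pos (abs_pos.2 h0) (norm_pos_iff.2 (sub_ne_zero.2 hne))).ne' habs
  rw [habs, hint, ← Int.cast_abs]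
  exact_mod_cast Int.one_le_abs hne0

theorem inv_mul_norm_le_maxMinInner {K : Type*} [Fintype K] [Nonempty K] {L : K → Type*}
    [∀ k, Fintype (L k)] [∀ k, Nonempty (L k)] {d : (k : K) → L k → E2} {R : ℝ}
    (hd : ∀ k l i, ∃ m : ℤ, d k l i = m) (hR : ∀ k l k' l', ‖d k l - d k' l'‖ ≤ R)
    (hpos : ∀ u ∈ sphere (0 : E2) 1, 0 < maxMinInner d u) (v : E2) :
    R⁻¹ * ‖v‖ ≤ maxMinInner d v := by
  obtain ⟨u, hu, hmin⟩ := (isCompact_sphere (0 : E2) 1).exists_isMinOn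
    (NormedSpace.sphere_nonempty.2 zero_le_one) (continuous_maxMinInner d).continuousOn
  have hu1 : ‖u‖ = 1 := mem_sphere_zero_iff_norm.1 hu
  have hγ := hpos u hu
  obtain ⟨k, l, k', l', hne, hkl, hkl'⟩ := exists_ne_inner_eq_maxMinInner d hu1
    (by rw [← norm_pos_iff, norm_rot, hu1]; exact one_pos) (inner_rot_self u) hγ
    (mul_norm_le_maxMinInner d fun _ hv => hmin hv)
  have h1 := one_le_abs_inner_mul_norm_sub hu1 (hd k l) (hd k' l') hne (hkl.trans hkl'.symm)
    (hkl ▸ hγ.ne')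
  rw [hkl, abs_of_pos hγ] at h1
  have hR1 : 1 ≤ maxMinInner d u * R := h1.trans (by gcongr; exact hR k l k' l')
  have hRpos : 0 < R := pos_of_mul_pos_right (one_pos.trans_le hR1) hγ.le
  refine mul_norm_le_maxMinInner d (fun w hw => ?_) v
  rw [inv_le_iff_one_le_mul₀ hRpos]
  exact hR1.trans (mul_le_mul_of_nonneg_right (hmin hw) hRpos.le)

theorem exists_int_sub_apply_of_isGrid {N : ℕ} {p q : E2} (hp : isGrid N p) (hq : isGrid N q)
    (i : Fin 2) : ∃ m : ℤ, (p - q) i = m := by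
  obtain ⟨a, -, ha⟩ := hp i
  obtain ⟨b, -, hb⟩ := hq i
  exact ⟨a - b, by simp [ha, hb]⟩

theorem norm_sub_le_of_isGrid {N : ℕ} {p q : E2} (hp : isGrid N p) (hq : isGrid N q) :
    ‖p - q‖ ≤ √2 * N := by
  have hcoord : ∀ i, (p - q) i ^ 2 ≤ (N : ℝ) ^ 2 := by
    intro i
    obtain ⟨a, ha, hpa⟩ := hp i
    obtain ⟨b, hb, hqb⟩ := hq i
    have ha' : (a : ℝ) ≤ N := Nat.cast_le.2 ha
    have hb' : (b : ℝ) ≤ N := Nat.cast_le.2 hb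
    rw [PiLp.sub_apply, hpa, hqb]
    exact sq_le_sq' (by linarith [b.cast_nonneg (α := ℝ)]) (by linarith [a.cast_nonneg (α := ℝ)])
  rw [← pow_le_pow_iff_left₀ (norm_nonneg _) (by positivity) two_ne_zero, norm_sq_eq_fin_two,
    mul_pow, Real.sq_sqrt zero_le_two]
  linarith [hcoord 0, hcoord 1]

section Hyperplane

variable {F : Type*} [NormedAddCommGroup F] [InnerProductSpace ℝ F] [FiniteDimensional ℝ F]
  [MeasurableSpace F] [BorelSpace F] (μ : Measure F) [μ.IsAddHaarMeasure] {u : F}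

theorem addHaar_setOf_inner_eq (hu : u ≠ 0) (t : ℝ) : μ {x | ⟪u, x⟫ = t} = 0 := by
  rcases eq_empty_or_nonempty {x : F | ⟪u, x⟫ = t} with h | ⟨x₀, hx₀⟩
  · rw [h, measure_empty]
  have hker : {x : F | ⟪u, x⟫ = t} = (· + -x₀) ⁻¹' (LinearMap.ker (innerₛₗ ℝ u) : Set F) := by
    ext x
    rw [mem_preimage, SetLike.mem_coe, LinearMap.mem_ker, innerₛₗ_apply_apply, ← sub_eq_add_neg,
      inner_sub_right, hx₀.out, sub_eq_zero, mem_ofPred_eq]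
  rw [hker, measure_preimage_add_right]
  refine Measure.addHaar_submodule μ _ fun htop => hu ?_
  have hu' : u ∈ LinearMap.ker (innerₛₗ ℝ u) := htop ▸ Submodule.mem_top
  simpa using hu'

theorem addHaar_convexHull_eq_zero_of_forall_inner_eq (hu : u ≠ 0) {s : Set F} {t : ℝ}
    (hs : ∀ x ∈ s, ⟪u, x⟫ = t) : μ (convexHull ℝ s) = 0 :=
  measure_mono_null (convexHull_min hs (convex_hyperplane (innerₛₗ ℝ u).isLinear t))
    (addHaar_setOf_inner_eq μ hu t)

end Hyperplane

theorem le_inner_of_mem_convexHull {F : Type*} [NormedAddCommGroup F] [InnerProductSpace ℝ F]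
    {L : Type*} {f : L → F} {u z : F} {c : ℝ} (h : ∀ l, c ≤ ⟪u, f l⟫)
    (hz : z ∈ convexHull ℝ (range f)) : c ≤ ⟪u, z⟫ :=
  convexHull_min (t := {w | c ≤ ⟪u, w⟫}) (range_subset_iff.2 h)
    (convex_halfSpace_ge (innerₛₗ ℝ u).isLinear c) hz

theorem ofReal_abs_inner_rot_div_four_le_volume {C : Set E2} (hC : Convex ℝ C) {a b c : E2}
    (ha : a ∈ C) (hb : b ∈ C) (hc : c ∈ C) :
    ENNReal.ofReal (|⟪rot (b - a), c - a⟫| / 4) ≤ volume C := by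
  set v : Fin 2 → E2 := ![(1 / 2 : ℝ) • (b - a), (1 / 2 : ℝ) • (c - a)]
  have hsub : (a + ·) '' parallelepiped v ⊆ C := by
    rintro _ ⟨_, hx, rfl⟩
    obtain ⟨s, ⟨hs0, hs1⟩, rfl⟩ := (mem_parallelepiped_iff v _).1 hx
    -- the midpoint of a point of `[a, b]` and a point of `[a, c]`
    have h1 := hC.add_smul_sub_mem ha hb ⟨hs0 0, hs1 0⟩
    have h2 := hC.add_smul_sub_mem ha hc ⟨hs0 1, hs1 1⟩
    convert hC h1 h2 (by norm_num : (0 : ℝ) ≤ 1 / 2) (by norm_num : (0 : ℝ) ≤ 1 / 2)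
      (by norm_num) using 1
    simp only [Fin.sum_univ_two, v, Matrix.cons_val_zero, Matrix.cons_val_one]
    module
  have hvol : volume (parallelepiped v) = ENNReal.ofReal (|⟪rot (b - a), c - a⟫| / 4) := by
    rw [← (EuclideanSpace.basisFun (Fin 2) ℝ).addHaar_eq_volume, Measure.addHaar_parallelepiped,
      Module.Basis.det_apply, Matrix.det_fin_two]
    rw [show (4 : ℝ) = |4| by norm_num, ← abs_div]
    congr 2
    simp only [v, Module.Basis.toMatrix_apply, OrthonormalBasis.coe_toBasis_repr_apply,
      EuclideanSpace.basisFun_repr, Matrix.cons_val_zero, Matrix.cons_val_one, PiLp.smul_apply,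
      PiLp.sub_apply, smul_eq_mul, inner_rot_left]
    ring
  calc ENNReal.ofReal (|⟪rot (b - a), c - a⟫| / 4) = volume ((a + ·) '' parallelepiped v) := by
        rw [image_add_left, measure_preimage_add, hvol]
    _ ≤ volume C := measure_mono hsub

theorem ofReal_sq_div_eight_le_volume {C : Set E2} (hC : Convex ℝ C) {η : ℝ} (hη : 0 ≤ η)
    (hw : ∀ w : E2, ∃ x ∈ C, ∃ y ∈ C, η * ‖w‖ ≤ ⟪w, x - y⟫) :
    ENNReal.ofReal (η ^ 2 / 8) ≤ volume C := by
  obtain ⟨b, hb, a, ha, hab⟩ := hw (EuclideanSpace.single 0 1)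
  have hlen : η ≤ ‖b - a‖ := by
    have := real_inner_le_norm (EuclideanSpace.single 0 1 : E2) (b - a)
    rw [PiLp.norm_single, norm_one] at this hab
    linarith
  obtain ⟨x, hx, y, hy, hxy⟩ := hw (rot (b - a))
  rw [norm_rot, show x - y = (x - a) - (y - a) by abel, inner_sub_right] at hxy
  obtain ⟨c, hc, hdet⟩ : ∃ c ∈ C, η * ‖b - a‖ / 2 ≤ |⟪rot (b - a), c - a⟫| := by
    by_contra! h
    have h1 := (abs_lt.1 (h x hx)).2
    have h2 := (abs_lt.1 (h y hy)).1
    linarith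
  refine le_trans (ENNReal.ofReal_le_ofReal ?_)
    (ofReal_abs_inner_rot_div_four_le_volume hC ha hb hc)
  nlinarith

section Polygons

variable {ι : Type*} [Fintype ι] [Nonempty ι] {κ : ι → Type*} [∀ i, Fintype (κ i)]
  [∀ i, Nonempty (κ i)] (V : (i : ι) → κ i → E2)

def vertexDiff (k : ι × ι) (l : κ k.1 × κ k.2) : E2 := V k.1 l.1 - V k.2 l.2

theorem exists_maxMinInner_le_inner_sub {X : ι → E2} (hX : ∀ i, X i ∈ convexHull ℝ (range (V i)))
    (u : E2) : ∃ i j, maxMinInner (vertexDiff V) u ≤ ⟪u, X i - X j⟫ := by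
  obtain ⟨k, hk⟩ := exists_forall_maxMinInner_le_inner (vertexDiff V) u
  refine ⟨k.1, k.2, le_inner_of_mem_convexHull hk ?_⟩
  have hsub : range (V k.1) - range (V k.2) ⊆ range (vertexDiff V k) := by
    rintro _ ⟨_, ⟨p, rfl⟩, _, ⟨q, rfl⟩, rfl⟩
    exact ⟨(p, q), rfl⟩
  have hmem : X k.1 - X k.2 ∈ convexHull ℝ (range (V k.1) - range (V k.2)) := by
    rw [convexHull_sub]; exact Set.sub_mem_sub (hX k.1) (hX k.2)
  exact convexHull_mono hsub hmem

theorem exists_inner_eq_of_maxMinInner_nonpos {u : E2} (h : maxMinInner (vertexDiff V) u ≤ 0) :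
    ∃ t, ∀ i, ∃ x ∈ convexHull ℝ (range (V i)), ⟪u, x⟫ = t := by
  set m : ι → ℝ := fun i => Finset.univ.inf' Finset.univ_nonempty fun p => ⟪u, V i p⟫
  obtain ⟨i₀, -, hi₀⟩ := Finset.exists_mem_eq_sup' Finset.univ_nonempty m
  refine ⟨m i₀, fun j => ?_⟩
  obtain ⟨p, -, hp⟩ := Finset.exists_mem_eq_inf' Finset.univ_nonempty fun p => ⟪u, V j p⟫
  obtain ⟨⟨p', q⟩, hpq⟩ := exists_inner_le_maxMinInner (vertexDiff V) u (i₀, j)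
  have hlow : ⟪u, V j p⟫ ≤ m i₀ := hp ▸ hi₀ ▸ Finset.le_sup' m (Finset.mem_univ j)
  have hhigh : m i₀ ≤ ⟪u, V j q⟫ := by
    have := Finset.inf'_le (fun p => ⟪u, V i₀ p⟫) (Finset.mem_univ p')
    simp only [vertexDiff, inner_sub_right] at hpq
    linarith
  have hconv := ((convex_convexHull ℝ (range (V j))).linear_image (innerₛₗ ℝ u)).ordConnected
  obtain ⟨x, hx, hxt⟩ := hconv.out ⟨V j p, subset_convexHull ℝ _ ⟨p, rfl⟩, rfl⟩
    ⟨V j q, subset_convexHull ℝ _ ⟨q, rfl⟩, rfl⟩ ⟨hlow, hhigh⟩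
  exact ⟨x, hx, hxt⟩

theorem maxMinInner_vertexDiff_pos
    (hdeg : ∀ s : Finset E2,
      (∀ i, (convexHull ℝ (s : Set E2) ∩ convexHull ℝ (range (V i))).Nonempty) →
      volume (convexHull ℝ (s : Set E2)) ≠ 0)
    {u : E2} (hu : u ∈ sphere (0 : E2) 1) : 0 < maxMinInner (vertexDiff V) u := by
  by_contra! h
  obtain ⟨t, hline⟩ := exists_inner_eq_of_maxMinInner_nonpos V h
  choose x hxO hxt using hline
  classical
  refine hdeg (Finset.univ.image x) (fun i => ⟨x i, subset_convexHull ℝ _ (by simp), hxO i⟩) ?_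
  refine addHaar_convexHull_eq_zero_of_forall_inner_eq volume (u := u) (t := t)
    (by rintro rfl; simp at hu) ?_
  simpa using hxt

theorem inv_mul_norm_le_maxMinInner_vertexDiff {N : ℕ} (hV : ∀ i j, isGrid N (V i j))
    (hpos : ∀ u ∈ sphere (0 : E2) 1, 0 < maxMinInner (vertexDiff V) u) (v : E2) :
    (2 * (√2 * N))⁻¹ * ‖v‖ ≤ maxMinInner (vertexDiff V) v :=
  inv_mul_norm_le_maxMinInner (fun _ _ => exists_int_sub_apply_of_isGrid (hV _ _) (hV _ _))
    (fun k l k' l' => (norm_sub_le _ _).trans (by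
      linarith [norm_sub_le_of_isGrid (hV k.1 l.1) (hV k.2 l.2),
        norm_sub_le_of_isGrid (hV k'.1 l'.1) (hV k'.2 l'.2)])) hpos v

end Polygons

end PolygonTransversal

open PolygonTransversal

theorem stmt14 : ∃ c : ℝ, 0 < c ∧ ∀ N : ℕ, 0 < N →
    ∀ (ι : Type) (_ : Fintype ι) (n : ι → ℕ) (V : (i : ι) → Fin (n i + 1) → E2),
    (∀ i j, isGrid N (V i j)) →
    ∀ F : Finset E2,
    (∀ i, (convexHull ℝ (↑F : Set E2) ∩ convexHull ℝ (Set.range (V i))).Nonempty) →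
    (∀ F' : Finset E2,
      (∀ i, (convexHull ℝ (↑F' : Set E2) ∩ convexHull ℝ (Set.range (V i))).Nonempty) →
      volume (convexHull ℝ (↑F : Set E2)) ≤ volume (convexHull ℝ (↑F' : Set E2))) →
    volume (convexHull ℝ (↑F : Set E2)) ≠ 0 →
    ENNReal.ofReal (c / (N : ℝ) ^ 8) ≤ volume (convexHull ℝ (↑F : Set E2)) := by
  refine ⟨1 / 64, by norm_num, fun N hN ι _ n V hV F hFint hFmin hFvol => ?_⟩
  have hdeg : ∀ F' : Finset E2,
      (∀ i, (convexHull ℝ (↑F' : Set E2) ∩ convexHull ℝ (Set.range (V i))).Nonempty) →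
      volume (convexHull ℝ (↑F' : Set E2)) ≠ 0 := fun F' hF' h0 =>
    hFvol (le_antisymm (h0 ▸ hFmin F' hF') zero_le)
  rcases isEmpty_or_nonempty ι with hι | hι
  · exact absurd (by simp) (hdeg ∅ isEmptyElim)
  have hwidth := inv_mul_norm_le_maxMinInner_vertexDiff V hV fun _ =>
    maxMinInner_vertexDiff_pos V hdeg
  choose X hXF hXO using hFint
  refine le_trans ?_ (ofReal_sq_div_eight_le_volume (convex_convexHull ℝ _)
    (η := (2 * (√2 * N))⁻¹) (by positivity) fun w => ?_)
  · have hN1 : (1 : ℝ) ≤ N := Nat.one_le_cast.2 hN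
    refine ENNReal.ofReal_le_ofReal ?_
    calc 1 / 64 / (N : ℝ) ^ 8 ≤ 1 / 64 / (N : ℝ) ^ 2 := by gcongr; norm_num [hN1]
      _ = (2 * (√2 * N))⁻¹ ^ 2 / 8 := by
        rw [inv_pow, mul_pow, mul_pow, Real.sq_sqrt zero_le_two]; ring
  · obtain ⟨i, j, h⟩ := exists_maxMinInner_le_inner_sub V hXO w
    exact ⟨X i, hXF i, X j, hXF j, (hwidth w).trans h⟩
end
end

section
/- Let E be an ellipse in ℝ² of minimum area containing a finite point set Q ⊆ ℝ² whose convex hull has positive area. Then the ellipse E' obtained by scaling E by factor 1/2 about its center is contained in the convex hull of Q. -/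
/-!
Normalise by `L` so that the minimal ellipse is the unit disk `B`. If some point `z` with
`‖z‖ ≤ 1/2` were outside the convex hull of the (normalised) points, a separating line would put
all of them in a cap `B ∩ {⟪u, w⟫ ≤ β}` with `β < 1/2`. Squeezing `B` by `1 - t` in the direction
`u`, widening it by `1 + t` across, and shifting it by `-t u` gives, for small `t > 0`, an ellipse
of area `(1 - t²) π` that still contains the cap, contradicting minimality.
-/

open MeasureTheory Metric Set
noncomputable section

open RealInnerProductSpace

section Stretch

variable {E : Type*} [NormedAddCommGroup E] [InnerProductSpace ℝ E] {u : E}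

-- For a unit vector `u`: scaling by `a` along `u` and by `b` on its orthogonal complement.
def stretch (u : E) (a b : ℝ) : E →ₗ[ℝ] E :=
  b • LinearMap.id + (a - b) • (innerₛₗ ℝ u).smulRight u

theorem stretch_apply (u : E) (a b : ℝ) (w : E) :
    stretch u a b w = b • w + ((a - b) * ⟪u, w⟫) • u := by
  simp [stretch, smul_smul]

theorem stretch_stretch (hu : ‖u‖ = 1) (a b a' b' : ℝ) (w : E) :
    stretch u a b (stretch u a' b' w) = stretch u (a * a') (b * b') w := by
  have huu : ⟪u, u⟫ = 1 := inner_self_eq_one_of_norm_eq_one hu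
  simp only [stretch_apply, inner_add_right, real_inner_smul_right, huu]
  module

theorem stretch_one_one (u : E) (w : E) : stretch u 1 1 w = w := by
  simp [stretch_apply]

theorem norm_stretch_sq (hu : ‖u‖ = 1) (a b : ℝ) (w : E) :
    ‖stretch u a b w‖ ^ 2 = a ^ 2 * ⟪u, w⟫ ^ 2 + b ^ 2 * (‖w‖ ^ 2 - ⟪u, w⟫ ^ 2) := by
  have huu : ⟪u, u⟫ = 1 := inner_self_eq_one_of_norm_eq_one hu
  rw [← real_inner_self_eq_norm_sq, ← real_inner_self_eq_norm_sq, stretch_apply]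
  simp only [inner_add_left, inner_add_right, real_inner_smul_left, real_inner_smul_right, huu,
    real_inner_comm u w]
  ring

def stretchEquiv (hu : ‖u‖ = 1) {a b : ℝ} (ha : a ≠ 0) (hb : b ≠ 0) : E ≃ₗ[ℝ] E :=
  .ofLinearMap (stretch u a b) (stretch u a⁻¹ b⁻¹)
    (LinearMap.ext fun w => by
      simp [stretch_stretch hu, mul_inv_cancel₀ ha, mul_inv_cancel₀ hb, stretch_one_one])
    (LinearMap.ext fun w => by
      simp [stretch_stretch hu, inv_mul_cancel₀ ha, inv_mul_cancel₀ hb, stretch_one_one])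

end Stretch

theorem det_stretch {u : E2} (hu : ‖u‖ = 1) (a b : ℝ) :
    LinearMap.det (stretch u a b) = a * b := by
  have hu2 : u 0 ^ 2 + u 1 ^ 2 = 1 := by
    simpa [hu, Fin.sum_univ_two] using (EuclideanSpace.real_norm_sq_eq u).symm
  rw [← LinearMap.det_toMatrix (EuclideanSpace.basisFun (Fin 2) ℝ).toBasis, Matrix.det_fin_two]
  simp only [Fin.isValue, LinearMap.toMatrix_apply, OrthonormalBasis.coe_toBasis,
    EuclideanSpace.basisFun_apply, stretch_apply, PiLp.inner_apply, PiLp.single_apply,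
    RCLike.inner_apply, Real.ringHom_apply, ite_mul, one_mul, zero_mul, Finset.sum_ite_eq',
    Finset.mem_univ, ↓reduceIte, map_add, map_smul, Finsupp.coe_add, Finsupp.coe_smul,
    Pi.add_apply, Pi.smul_apply, OrthonormalBasis.coe_toBasis_repr_apply,
    EuclideanSpace.basisFun_repr, smul_eq_mul, mul_one, zero_ne_one, mul_zero, zero_add,
    one_ne_zero]
  linear_combination b * (a - b) * hu2

-- Any small `t > 0` would do; `t = (1 - 2β) / 8` makes the slack a sum of visibly nonnegative terms.
theorem cap_ineq {β t x n : ℝ} (ht : t = (1 - 2 * β) / 8) (hβ : β < 1 / 2) (hx : x ≤ β)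
    (hx1 : -1 ≤ x) (hn : n ≤ 1) :
    (x + t) ^ 2 * (1 + t) ^ 2 + (n - x ^ 2) * (1 - t) ^ 2 ≤ (1 - t) ^ 2 * (1 + t) ^ 2 := by
  have ht0 : 0 ≤ t := by linarith
  have key : (1 - t) ^ 2 * (1 + t) ^ 2 - (x + t) ^ 2 * (1 + t) ^ 2 - (n - x ^ 2) * (1 - t) ^ 2
      = (1 - n) * (1 - t) ^ 2 + 4 * t * (x + 1) * (β - x) + 2 * t ^ 2 * (x + 1) * (6 - t) := by
    rw [ht]; ring
  have h1 : 0 ≤ (1 - n) * (1 - t) ^ 2 := mul_nonneg (by linarith) (sq_nonneg _)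
  have h2 : 0 ≤ t * (x + 1) * (β - x) := mul_nonneg (mul_nonneg ht0 (by linarith)) (by linarith)
  have h3 : 0 ≤ t ^ 2 * (x + 1) * (6 - t) :=
    mul_nonneg (mul_nonneg (sq_nonneg t) (by linarith)) (by linarith)
  linarith

theorem norm_stretch_add_smul_le_one {E : Type*} [NormedAddCommGroup E] [InnerProductSpace ℝ E]
    {u w : E} (hu : ‖u‖ = 1) {β t : ℝ} (ht : t = (1 - 2 * β) / 8) (hβ : β < 1 / 2)
    (hw : ‖w‖ ≤ 1) (hwu : ⟪u, w⟫ ≤ β) :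
    ‖stretch u (1 - t)⁻¹ (1 + t)⁻¹ (w + t • u)‖ ≤ 1 := by
  have huu : ⟪u, u⟫ = 1 := inner_self_eq_one_of_norm_eq_one hu
  have hx1 : -1 ≤ ⟪u, w⟫ :=
    (abs_le.mp ((abs_real_inner_le_norm u w).trans (by rwa [hu, one_mul]))).1
  have ha : 1 - t ≠ 0 := by linarith
  have hb : 1 + t ≠ 0 := by linarith
  have hshift : ⟪u, w + t • u⟫ = ⟪u, w⟫ + t := by
    rw [inner_add_right, real_inner_smul_right, huu, mul_one]
  have hnorm : ‖w + t • u‖ ^ 2 = ‖w‖ ^ 2 + 2 * t * ⟪u, w⟫ + t ^ 2 := by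
    rw [norm_add_sq_real, real_inner_smul_right, norm_smul, hu, real_inner_comm,
      Real.norm_eq_abs, mul_one, sq_abs]
    ring
  have hpoly := cap_ineq ht hβ hwu hx1 (pow_le_one₀ (n := 2) (norm_nonneg w) hw)
  rw [← div_le_one (by positivity : (0 : ℝ) < (1 - t) ^ 2 * (1 + t) ^ 2)] at hpoly
  rw [← sq_le_one_iff₀ (norm_nonneg _), norm_stretch_sq hu, hnorm, hshift]
  convert hpoly using 1
  field_simp
  ring

theorem exists_abs_det_lt_one_cap_subset_image_closedBall {u : E2} (hu : ‖u‖ = 1) {β : ℝ}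
    (hβ : β < 1 / 2) :
    ∃ M : E2 ≃ᵃ[ℝ] E2, |LinearMap.det (M.linear : E2 →ₗ[ℝ] E2)| < 1 ∧
      closedBall 0 1 ∩ {w | ⟪u, w⟫ ≤ β} ⊆ M '' closedBall 0 1 := by
  set t := (1 - 2 * max β 0) / 8 with ht
  have hβ' : max β 0 < 1 / 2 := max_lt hβ (by norm_num)
  have ht0 : 0 < t := by linarith
  have ht1 : t < 1 := by linarith [le_max_right β 0]
  have ha : 1 - t ≠ 0 := by linarith
  have hb : 1 + t ≠ 0 := by linarith
  refine ⟨(stretchEquiv hu ha hb).toAffineEquiv.trans (AffineEquiv.constVAdd ℝ E2 (-t • u)),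
    ?_, ?_⟩
  · change |LinearMap.det (stretch u (1 - t) (1 + t))| < 1
    rw [det_stretch hu, abs_of_pos (by nlinarith)]
    nlinarith
  · rintro w ⟨hw, hwu⟩
    refine ⟨stretch u (1 - t)⁻¹ (1 + t)⁻¹ (w + t • u), ?_, ?_⟩
    · exact mem_closedBall_zero_iff.mpr <| norm_stretch_add_smul_le_one hu ht hβ'
        (mem_closedBall_zero_iff.mp hw) (hwu.trans (le_max_left β 0))
    · change -t • u + stretch u (1 - t) (1 + t) (stretch u (1 - t)⁻¹ (1 + t)⁻¹ (w + t • u)) = w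
      rw [stretch_stretch hu, mul_inv_cancel₀ ha, mul_inv_cancel₀ hb, stretch_one_one]
      module

section Volume

variable {E : Type*} [NormedAddCommGroup E] [NormedSpace ℝ E] [MeasurableSpace E] [BorelSpace E]
  [FiniteDimensional ℝ E] (μ : Measure E) [μ.IsAddHaarMeasure]

theorem addHaar_image_affineEquiv (A : E ≃ᵃ[ℝ] E) (s : Set E) :
    μ (A '' s) = ENNReal.ofReal |LinearMap.det (A.linear : E →ₗ[ℝ] E)| * μ s := by
  have hA : (A : E → E) = (A 0 + ·) ∘ A.linear := by
    ext x
    simpa [add_comm] using A.map_vadd 0 x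
  rw [hA, image_comp, image_add_left, measure_preimage_add, ← LinearEquiv.coe_coe,
    Measure.addHaar_image_linearMap]

theorem addHaar_image_trans_lt_of_abs_det_lt_one {s : Set E} (hs₀ : μ s ≠ 0) (hs : μ s ≠ ⊤)
    (A M : E ≃ᵃ[ℝ] E) (hM : |LinearMap.det (M.linear : E →ₗ[ℝ] E)| < 1) :
    μ ((M.trans A) '' s) < μ (A '' s) := by
  have hA : LinearMap.det (A.linear : E →ₗ[ℝ] E) ≠ 0 := (LinearEquiv.isUnit_det' _).ne_zero
  rw [AffineEquiv.coe_trans, image_comp, addHaar_image_affineEquiv μ A,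
    addHaar_image_affineEquiv μ A]
  refine ENNReal.mul_lt_mul_right (by simpa using hA) ENNReal.ofReal_ne_top ?_
  rw [addHaar_image_affineEquiv μ M]
  simpa using ENNReal.mul_lt_mul_left hs₀ hs (ENNReal.ofReal_lt_one.mpr hM)

end Volume

theorem exists_unit_inner_lt_of_notMem {E : Type*} [NormedAddCommGroup E] [InnerProductSpace ℝ E]
    [CompleteSpace E] {C : Set E} (hC : Convex ℝ C) (hCc : IsClosed C) (hne : C.Nonempty)
    {x : E} (hx : x ∉ C) :
    ∃ u : E, ‖u‖ = 1 ∧ ∃ β : ℝ, β < ⟪u, x⟫ ∧ ∀ c ∈ C, ⟪u, c⟫ < β := by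
  obtain ⟨f, r, hfC, hfx⟩ := geometric_hahn_banach_closed_point hC hCc hx
  set v := (InnerProductSpace.toDual ℝ E).symm f
  have hv (y : E) : ⟪v, y⟫ = f y := InnerProductSpace.toDual_symm_apply
  have hv0 : 0 < ‖v‖ := by
    obtain ⟨c, hc⟩ := hne
    refine norm_pos_iff.mpr fun h => ?_
    have hc := hfC c hc
    rw [← hv, h, inner_zero_left] at hc hfx
    linarith
  refine ⟨‖v‖⁻¹ • v, by rw [norm_smul, norm_inv, norm_norm, inv_mul_cancel₀ hv0.ne'], r / ‖v‖,
    ?_, fun c hc => ?_⟩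
  · rw [real_inner_smul_left, hv, inv_mul_eq_div]
    exact div_lt_div_of_pos_right hfx hv0
  · rw [real_inner_smul_left, hv, inv_mul_eq_div]
    exact div_lt_div_of_pos_right (hfC c hc) hv0

theorem AffineMap.homothety_map_zero {k V P : Type*} [CommRing k] [AddCommGroup V] [Module k V]
    [AddTorsor V P] (f : V →ᵃ[k] P) (r : k) (z : V) :
    homothety (f 0) r (f z) = f (r • z) := by
  rw [homothety_eq_lineMap, ← f.apply_lineMap, lineMap_apply_module', sub_zero, add_zero]

/-- Ellipses are modelled as affine images of the closed unit disk. -/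
theorem stmt15 (Q : Finset E2) (hQ : volume (convexHull ℝ (↑Q : Set E2)) ≠ 0)
    (L : E2 ≃ᵃ[ℝ] E2)
    (hcontain : (↑Q : Set E2) ⊆ (L : E2 → E2) '' closedBall (0 : E2) 1)
    (hmin : ∀ L' : E2 ≃ᵃ[ℝ] E2,
      (↑Q : Set E2) ⊆ (L' : E2 → E2) '' closedBall (0 : E2) 1 →
      volume ((L : E2 → E2) '' closedBall (0 : E2) 1) ≤
        volume ((L' : E2 → E2) '' closedBall (0 : E2) 1)) :
    (AffineMap.homothety (L 0) (1 / 2 : ℝ)) '' ((L : E2 → E2) '' closedBall (0 : E2) 1) ⊆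
      convexHull ℝ (↑Q : Set E2) := by
  rintro _ ⟨_, ⟨z, hz, rfl⟩, rfl⟩
  rw [show AffineMap.homothety (L 0) (1 / 2 : ℝ) (L z) = L ((1 / 2 : ℝ) • z) from
    L.toAffineMap.homothety_map_zero _ _]
  by_contra hzQ
  have hQne : (Q : Set E2).Nonempty := by
    contrapose! hQ
    simp [hQ]
  have hzP : (1 / 2 : ℝ) • z ∉ convexHull ℝ (L.symm '' Q) := fun h ↦ hzQ <|
    convexHull_min (by rintro _ ⟨q, hq, rfl⟩; simpa using subset_convexHull ℝ _ hq)
      ((convex_convexHull ℝ _).affine_preimage L.toAffineMap) h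
  obtain ⟨u, hu, β, hβz, hβP⟩ := exists_unit_inner_lt_of_notMem (convex_convexHull ℝ _)
    ((Q.finite_toSet.image _).isClosed_convexHull ℝ) (hQne.image _).convexHull hzP
  have hβ : β < 1 / 2 := by
    refine hβz.trans_le ((real_inner_le_norm _ _).trans ?_)
    rw [hu, one_mul, norm_smul]
    have := mem_closedBall_zero_iff.mp hz
    norm_num
    linarith
  obtain ⟨M, hMdet, hcap⟩ := exists_abs_det_lt_one_cap_subset_image_closedBall hu hβ
  have hQM : (Q : Set E2) ⊆ (M.trans L) '' closedBall 0 1 := by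
    intro q hq
    obtain ⟨w, hw, rfl⟩ := hcontain hq
    obtain ⟨y, hy, hyw⟩ := hcap ⟨hw, (hβP w (subset_convexHull ℝ _ ⟨L w, hq, by simp⟩)).le⟩
    exact ⟨y, hy, by simp [hyw]⟩
  exact (hmin _ hQM).not_gt <| addHaar_image_trans_lt_of_abs_det_lt_one volume
    (measure_closedBall_pos volume 0 one_pos).ne' measure_closedBall_lt_top.ne L M hMdet
end
end

section
/- Let s and t be points in ℝ², and P₁, …, P_k a sequence of (possibly unbounded) closed convex sets in ℝ². Then there is a unique shortest polygonal path from s to t visiting P₁, …, P_k in order, i.e., a unique path π minimizing length among paths for which there exist points qᵢ ∈ Pᵢ appearing along π in order of index. -/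
open MeasureTheory Metric Set unitInterval
noncomputable section

/-- A path visits the convex sets `P 1, …, P k` in order. -/
def VisitsInOrder {s t : E2} (γ : Path s t) {k : ℕ} (P : Fin k → Set E2) : Prop :=
  ∃ q : Fin k → unitInterval, Monotone q ∧ ∀ i, γ (q i) ∈ P i

/-- Length of a path, as its total variation. -/
def pathLen {s t : E2} (γ : Path s t) : ENNReal :=
  eVariationOn (fun x : unitInterval => γ x) Set.univ

/-! A path visiting `P₁, …, P_k` at points `qᵢ ∈ Pᵢ` is at least as long as the inscribed polyline
`s, q₁, …, q_k, t`, and the polygonal path along that polyline has exactly its length. So the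
shortest paths are the polygonal paths along shortest polylines with vertices `qᵢ ∈ Pᵢ`; these exist
because the polyline length is continuous and coercive, and a path whose length equals that of an
inscribed polyline traces exactly that polyline.

Uniqueness is proved by induction on `k`. For two shortest polylines the polyline through the
midpoints of their vertices is admissible by convexity and no longer, which by strict convexity of
the norm forces the first legs `s q₁` and `s q₁'` to point the same way. The nearer of `q₁, q₁'`
then lies on the other first leg, and the tails from it are again shortest, so by induction both
polylines trace the same set.
-/

section PolylineLength

variable {X : Type*} [PseudoMetricSpace X]

def polylineLength : {k : ℕ} → X → (Fin k → X) → X → ℝ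
  | 0, a, _, b => dist a b
  | _ + 1, a, q, b => dist a (q 0) + polylineLength (q 0) (Fin.tail q) b

theorem polylineLength_zero (a : X) (q : Fin 0 → X) (b : X) : polylineLength a q b = dist a b :=
  rfl

theorem polylineLength_succ {k : ℕ} (a : X) (q : Fin (k + 1) → X) (b : X) :
    polylineLength a q b = dist a (q 0) + polylineLength (q 0) (Fin.tail q) b :=
  rfl

theorem polylineLength_cons {k : ℕ} (a x : X) (q : Fin k → X) (b : X) :
    polylineLength a (Fin.cons x q) b = dist a x + polylineLength x q b :=
  rfl

theorem polylineLength_nonneg {k : ℕ} (a : X) (q : Fin k → X) (b : X) :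
    0 ≤ polylineLength a q b := by
  induction k generalizing a with
  | zero => exact dist_nonneg
  | succ k ih => exact add_nonneg dist_nonneg (ih _ _)

theorem polylineLength_le_dist_add {k : ℕ} (a a' : X) (q : Fin k → X) (b : X) :
    polylineLength a q b ≤ dist a a' + polylineLength a' q b := by
  cases k with
  | zero => exact dist_triangle a a' b
  | succ k =>
    simp only [polylineLength_succ]
    linarith [dist_triangle a a' (q 0)]

theorem dist_le_polylineLength {k : ℕ} (a : X) (q : Fin k → X) (b : X) (i : Fin k) :
    dist a (q i) ≤ polylineLength a q b := by
  induction k generalizing a with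
  | zero => exact i.elim0
  | succ k ih =>
    rw [polylineLength_succ]
    cases i using Fin.cases with
    | zero => linarith [polylineLength_nonneg (q 0) (Fin.tail q) b]
    | succ j =>
      exact (dist_triangle a (q 0) (q j.succ)).trans (add_le_add_right (ih (q 0) (Fin.tail q) j) _)

theorem Continuous.polylineLength {Y : Type*} [TopologicalSpace Y] {k : ℕ} {a : Y → X}
    {q : Y → Fin k → X} (b : X) (ha : Continuous a) (hq : Continuous q) :
    Continuous fun y => _root_.polylineLength (a y) (q y) b := by
  induction k generalizing a with
  | zero => exact ha.dist continuous_const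
  | succ k ih =>
    simp only [polylineLength_succ]
    have hq0 : Continuous fun y => q y 0 := (continuous_apply 0).comp hq
    exact (ha.dist hq0).add (ih hq0 (continuous_pi fun i => (continuous_apply i.succ).comp hq))

def IsShortestPolyline {k : ℕ} (s t : X) (P : Fin k → Set X) (q : Fin k → X) : Prop :=
  q ∈ univ.pi P ∧ IsMinOn (fun c => polylineLength s c t) (univ.pi P) q

theorem IsShortestPolyline.of_polylineLength_le {k : ℕ} {s t : X} {P : Fin k → Set X}
    {q c : Fin k → X} (hq : IsShortestPolyline s t P q) (hc : c ∈ univ.pi P)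
    (hle : polylineLength s c t ≤ polylineLength s q t) : IsShortestPolyline s t P c :=
  ⟨hc, fun _ hw => hle.trans (hq.2 hw)⟩

theorem IsShortestPolyline.tail {k : ℕ} {s t : X} {P : Fin (k + 1) → Set X}
    {q : Fin (k + 1) → X} (hq : IsShortestPolyline s t P q) :
    IsShortestPolyline (q 0) t (Fin.tail P) (Fin.tail q) := by
  refine ⟨fun i _ => hq.1 i.succ trivial, fun w hw => ?_⟩
  have hcons : Fin.cons (q 0) w ∈ univ.pi P := by
    simp only [mem_univ_pi, Fin.forall_fin_succ, Fin.cons_zero, Fin.cons_succ]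
    exact ⟨hq.1 0 trivial, fun i => hw i trivial⟩
  have : polylineLength s q t ≤ polylineLength s (Fin.cons (q 0) w) t := hq.2 hcons
  rw [polylineLength_cons, polylineLength_succ] at this
  exact (add_le_add_iff_left _).mp this

theorem exists_isShortestPolyline [ProperSpace X] {k : ℕ} (s t : X) {P : Fin k → Set X}
    (hclosed : ∀ i, IsClosed (P i)) (hne : ∀ i, (P i).Nonempty) :
    ∃ q, IsShortestPolyline s t P q := by
  obtain ⟨q₀, hq₀⟩ := univ_pi_nonempty_iff.mpr hne
  have hcoercive : ∀ᶠ q in Filter.cocompact _ ⊓ Filter.principal (univ.pi P),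
      polylineLength s q₀ t ≤ polylineLength s q t := by
    rw [Filter.eventually_inf_principal]
    refine Filter.mem_cocompact.mpr ⟨univ.pi fun _ => closedBall s (polylineLength s q₀ t),
      isCompact_univ_pi fun _ => isCompact_closedBall _ _, fun q hq _ => ?_⟩
    obtain ⟨i, -, hi⟩ := not_forall₂.mp hq
    rw [mem_closedBall, dist_comm] at hi
    exact (not_le.mp hi).le.trans (dist_le_polylineLength s q t i)
  exact (continuous_const.polylineLength t continuous_id).continuousOn.exists_isMinOn'
    (isClosed_set_pi fun i _ => hclosed i) hq₀ hcoercive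

end PolylineLength

theorem segment_eq_union_of_wbtw {V : Type*} [AddCommGroup V] [Module ℝ V] {x y z : V}
    (h : Wbtw ℝ x y z) : segment ℝ x z = segment ℝ x y ∪ segment ℝ y z := by
  obtain ⟨r, ⟨hr₀, hr₁⟩, rfl⟩ := h
  set f := AffineMap.lineMap (k := ℝ) x z
  have hx : f 0 = x := AffineMap.lineMap_apply_zero x z
  have hz : f 1 = z := AffineMap.lineMap_apply_one x z
  calc segment ℝ x z = f '' segment ℝ 0 1 := by rw [image_segment, hx, hz]
    _ = f '' segment ℝ 0 r ∪ f '' segment ℝ r 1 := by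
      rw [segment_eq_Icc hr₀, segment_eq_Icc hr₁, segment_eq_Icc zero_le_one, ← image_union,
        Icc_union_Icc_eq_Icc hr₀ hr₁]
    _ = segment ℝ x (f r) ∪ segment ℝ (f r) z := by rw [image_segment, image_segment, hx, hz]

section Polyline

variable {V : Type*} [NormedAddCommGroup V] [NormedSpace ℝ V]

def polyline : {k : ℕ} → V → (Fin k → V) → V → Set V
  | 0, a, _, b => segment ℝ a b
  | _ + 1, a, q, b => segment ℝ a (q 0) ∪ polyline (q 0) (Fin.tail q) b

theorem polyline_succ {k : ℕ} (a : V) (q : Fin (k + 1) → V) (b : V) :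
    polyline a q b = segment ℝ a (q 0) ∪ polyline (q 0) (Fin.tail q) b :=
  rfl

theorem polylineLength_midpoint_le {k : ℕ} (a a' : V) (q q' : Fin k → V) (b b' : V) :
    polylineLength (midpoint ℝ a a') (fun i => midpoint ℝ (q i) (q' i)) (midpoint ℝ b b') ≤
      (polylineLength a q b + polylineLength a' q' b') / 2 := by
  induction k generalizing a a' with
  | zero => exact dist_midpoint_midpoint_le a a' b b'
  | succ k ih =>
    calc _ ≤ (dist a (q 0) + dist a' (q' 0)) / 2 +
          (polylineLength (q 0) (Fin.tail q) b + polylineLength (q' 0) (Fin.tail q') b') / 2 :=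
          add_le_add (dist_midpoint_midpoint_le a a' (q 0) (q' 0))
            (ih (q 0) (q' 0) (Fin.tail q) (Fin.tail q'))
      _ = _ := by simp only [polylineLength_succ]; ring

variable [StrictConvexSpace ℝ V]

theorem polyline_eq_segment_union {k : ℕ} {a a' b : V} {q : Fin k → V}
    (h : polylineLength a q b = dist a a' + polylineLength a' q b) :
    polyline a q b = segment ℝ a a' ∪ polyline a' q b := by
  cases k with
  | zero =>
    have h' : Wbtw ℝ a a' b := dist_add_dist_eq_iff.mp h.symm
    exact segment_eq_union_of_wbtw h'
  | succ k =>
    simp only [polylineLength_succ] at h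
    have h' : Wbtw ℝ a a' (q 0) := dist_add_dist_eq_iff.mp (by linarith [dist_triangle a a' (q 0)])
    rw [polyline_succ, polyline_succ, ← union_assoc, ← segment_eq_union_of_wbtw h']

theorem IsShortestPolyline.sameRay {k : ℕ} {s t : V} {P : Fin (k + 1) → Set V}
    (hP : ∀ i, Convex ℝ (P i)) {q q' : Fin (k + 1) → V} (hq : IsShortestPolyline s t P q)
    (hq' : IsShortestPolyline s t P q') : SameRay ℝ (q 0 - s) (q' 0 - s) := by
  have hm : (fun i => midpoint ℝ (q i) (q' i)) ∈ univ.pi P :=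
    fun i _ => (hP i).midpoint_mem (hq.1 i trivial) (hq'.1 i trivial)
  have htail := polylineLength_midpoint_le (q 0) (q' 0) (Fin.tail q) (Fin.tail q') t t
  rw [midpoint_self] at htail
  set c := midpoint ℝ (q 0) (q' 0) with hc
  have hq_le_m : polylineLength s q t ≤ dist s c +
      polylineLength c (fun i => midpoint ℝ (Fin.tail q i) (Fin.tail q' i)) t := hq.2 hm
  have hq_le_q' : polylineLength s q t ≤ polylineLength s q' t := hq.2 hq'.1
  have hq'_le_q : polylineLength s q' t ≤ polylineLength s q t := hq'.2 hq.1
  simp only [polylineLength_succ] at hq_le_m hq_le_q' hq'_le_q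
  have hnorm : ‖(q 0 - s) + (q' 0 - s)‖ = 2 * dist s c := by
    have : (q 0 - s) + (q' 0 - s) = (2 : ℝ) • (c - s) := by
      rw [hc, midpoint_eq_smul_add, invOf_eq_inv]; module
    rw [this, norm_smul, Real.norm_two, dist_eq_norm']
  rw [sameRay_iff_norm_add]
  refine le_antisymm (norm_add_le _ _) ?_
  rw [hnorm, ← dist_eq_norm', ← dist_eq_norm']
  linarith

theorem IsShortestPolyline.polyline_eq {k : ℕ} {s t : V} {P : Fin k → Set V}
    (hP : ∀ i, Convex ℝ (P i)) {q q' : Fin k → V} (hq : IsShortestPolyline s t P q)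
    (hq' : IsShortestPolyline s t P q') : polyline s q t = polyline s q' t := by
  induction k generalizing s with
  | zero => rfl
  | succ k ih =>
    suffices key : ∀ {q q'}, IsShortestPolyline s t P q → IsShortestPolyline s t P q' →
        Wbtw ℝ s (q 0) (q' 0) → polyline s q t = polyline s q' t by
      rcases wbtw_total_of_sameRay_vsub_left (x := s) (hq.sameRay hP hq') with h | h
      exacts [key hq hq' h, (key hq' hq h).symm]
    intro q q' hq hq' hs
    set a := q 0
    set b := q' 0
    have hlen : polylineLength s q t = polylineLength s q' t :=
      le_antisymm (hq.2 hq'.1) (hq'.2 hq.1)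
    have hsab : dist s a + dist a b = dist s b := dist_add_dist_eq_iff.mpr hs
    have h₁ := polylineLength_le_dist_add a b (Fin.tail q') t
    have h₂ : polylineLength a (Fin.tail q) t ≤ polylineLength a (Fin.tail q') t :=
      hq.tail.2 hq'.tail.1
    simp only [polylineLength_succ] at hlen
    have hq'a : IsShortestPolyline a t (Fin.tail P) (Fin.tail q') :=
      hq.tail.of_polylineLength_le hq'.tail.1 (by linarith)
    calc polyline s q t = segment ℝ s a ∪ polyline a (Fin.tail q) t := rfl
      _ = segment ℝ s a ∪ (segment ℝ a b ∪ polyline b (Fin.tail q') t) := by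
        rw [ih (fun i => hP i.succ) hq.tail hq'a, polyline_eq_segment_union (by linarith)]
      _ = polyline s q' t := by rw [← union_assoc, ← segment_eq_union_of_wbtw hs]; rfl

end Polyline

section Variation

theorem eVariationOn_Icc_add_Icc {X : Type*} [PseudoEMetricSpace X] (F : ℝ → X) {a b c : ℝ}
    (hab : a ≤ b) (hbc : b ≤ c) :
    eVariationOn F (Icc a b) + eVariationOn F (Icc b c) = eVariationOn F (Icc a c) := by
  simpa using eVariationOn.Icc_add_Icc F (s := univ) hab hbc (mem_univ b)

theorem ofReal_polylineLength_le_eVariationOn {X : Type*} [PseudoMetricSpace X] (F : ℝ → X)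
    {k : ℕ} {a b : ℝ} {τ : Fin k → ℝ} (hab : a ≤ b) (hτ : Monotone τ) (hτab : ∀ i, τ i ∈ Icc a b) :
    ENNReal.ofReal (polylineLength (F a) (fun i => F (τ i)) (F b)) ≤ eVariationOn F (Icc a b) := by
  induction k generalizing a with
  | zero =>
    rw [polylineLength_zero, ← edist_dist]
    exact eVariationOn.edist_le F (left_mem_Icc.mpr hab) (right_mem_Icc.mpr hab)
  | succ k ih =>
    obtain ⟨hac, hcb⟩ := hτab 0
    rw [polylineLength_succ, ENNReal.ofReal_add dist_nonneg (polylineLength_nonneg _ _ _),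
      ← edist_dist, ← eVariationOn_Icc_add_Icc F hac hcb]
    exact add_le_add (eVariationOn.edist_le F (left_mem_Icc.mpr hac) (right_mem_Icc.mpr hac))
      (ih hcb (hτ.comp Fin.strictMono_succ.monotone)
        fun i => ⟨hτ (Fin.zero_le _), (hτab i.succ).2⟩)

theorem ENNReal.eq_and_eq_of_le_of_le_of_add_eq {a b c d : ENNReal} (hac : a ≤ c) (hbd : b ≤ d)
    (h : c + d = a + b) (hab : a + b ≠ ⊤) : c = a ∧ d = b := by
  rw [← h] at hab
  obtain ⟨hc, hd⟩ := ENNReal.add_ne_top.mp hab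
  refine ⟨le_antisymm ?_ hac, le_antisymm ?_ hbd⟩
  · exact (ENNReal.add_le_add_iff_right hd).mp (h.trans_le (add_le_add le_rfl hbd))
  · exact (ENNReal.add_le_add_iff_left hc).mp (h.trans_le (add_le_add hac le_rfl))

variable {V : Type*} [NormedAddCommGroup V] [NormedSpace ℝ V] [StrictConvexSpace ℝ V]

theorem image_Icc_eq_segment_of_eVariationOn_eq {F : ℝ → V} {a b : ℝ} (hab : a ≤ b)
    (hF : ContinuousOn F (Icc a b)) (h : eVariationOn F (Icc a b) = edist (F a) (F b)) :
    F '' Icc a b = segment ℝ (F a) (F b) := by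
  have hwbtw : ∀ u ∈ Icc a b, Wbtw ℝ (F a) (F u) (F b) := by
    intro u hu
    refine dist_add_dist_eq_iff.mp (le_antisymm ?_ (dist_triangle _ _ _))
    rw [← ENNReal.ofReal_le_ofReal_iff dist_nonneg, ENNReal.ofReal_add dist_nonneg dist_nonneg,
      ← edist_dist, ← edist_dist, ← edist_dist, ← h, ← eVariationOn_Icc_add_Icc F hu.1 hu.2]
    exact add_le_add (eVariationOn.edist_le F (left_mem_Icc.mpr hu.1) (right_mem_Icc.mpr hu.1))
      (eVariationOn.edist_le F (left_mem_Icc.mpr hu.2) (right_mem_Icc.mpr hu.2))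
  refine Subset.antisymm (image_subset_iff.mpr fun u hu => (hwbtw u hu).mem_segment) ?_
  rw [segment_eq_image_lineMap]
  rintro _ ⟨θ, hθ, rfl⟩
  -- points of the segment are determined by their distance to `F a`
  obtain ⟨u, hu, hdist⟩ : ∃ u ∈ Icc a b, dist (F a) (F u) = θ * dist (F a) (F b) := by
    refine intermediate_value_Icc hab ((continuous_const.dist continuous_id).comp_continuousOn hF)
      ⟨?_, ?_⟩
    · simpa using mul_nonneg hθ.1 dist_nonneg
    · simpa using mul_le_of_le_one_left dist_nonneg hθ.2
  refine ⟨u, hu, eq_lineMap_of_dist_eq_mul_of_dist_eq_mul hdist ?_⟩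
  linarith [dist_add_dist_eq_iff.mpr (hwbtw u hu)]

theorem image_Icc_eq_polyline_of_eVariationOn_eq {F : ℝ → V} {k : ℕ} {a b : ℝ} {τ : Fin k → ℝ}
    (hab : a ≤ b) (hτ : Monotone τ) (hτab : ∀ i, τ i ∈ Icc a b) (hF : ContinuousOn F (Icc a b))
    (h : eVariationOn F (Icc a b) =
      ENNReal.ofReal (polylineLength (F a) (fun i => F (τ i)) (F b))) :
    F '' Icc a b = polyline (F a) (fun i => F (τ i)) (F b) := by
  induction k generalizing a with
  | zero =>
    rw [polylineLength_zero, ← edist_dist] at h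
    exact image_Icc_eq_segment_of_eVariationOn_eq hab hF h
  | succ k ih =>
    obtain ⟨hac, hcb⟩ := hτab 0
    have hτ' : Monotone (Fin.tail τ) := hτ.comp Fin.strictMono_succ.monotone
    have hτab' : ∀ i, Fin.tail τ i ∈ Icc (τ 0) b :=
      fun i => ⟨hτ (Fin.zero_le _), (hτab i.succ).2⟩
    rw [polylineLength_succ, ENNReal.ofReal_add dist_nonneg (polylineLength_nonneg _ _ _),
      ← edist_dist, ← eVariationOn_Icc_add_Icc F hac hcb] at h
    obtain ⟨h₁, h₂⟩ := ENNReal.eq_and_eq_of_le_of_le_of_add_eq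
      (eVariationOn.edist_le F (left_mem_Icc.mpr hac) (right_mem_Icc.mpr hac))
      (ofReal_polylineLength_le_eVariationOn F hcb hτ' hτab') h
      (ENNReal.add_ne_top.mpr ⟨edist_ne_top _ _, ENNReal.ofReal_ne_top⟩)
    rw [← Icc_union_Icc_eq_Icc hac hcb, image_union, polyline_succ,
      image_Icc_eq_segment_of_eVariationOn_eq hac (hF.mono (Icc_subset_Icc_right hcb)) h₁,
      ih hcb hτ' hτab' (hF.mono (Icc_subset_Icc_left hac)) h₂]
    rfl

end Variation

def polygonalPath {V : Type*} [NormedAddCommGroup V] [NormedSpace ℝ V] :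
    {k : ℕ} → (x y : V) → (Fin k → V) → Path x y
  | 0, x, y, _ => Path.segment x y
  | _ + 1, x, y, q => (Path.segment x (q 0)).trans (polygonalPath (q 0) y (Fin.tail q))

section PathLength

theorem pathLen_eq_eVariationOn_extend {s t : E2} (γ : Path s t) :
    pathLen γ = eVariationOn γ.extend (Icc 0 1) := by
  have h := eVariationOn.comp_eq_of_monotoneOn γ.extend ((↑) : unitInterval → ℝ)
    ((Subtype.mono_coe _).monotoneOn univ)
  rw [image_univ, Subtype.range_coe] at h
  rw [pathLen, ← h]
  congr 1
  funext u
  exact (γ.extend_extends' u).symm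

theorem range_eq_image_extend {s t : E2} (γ : Path s t) : range γ = γ.extend '' Icc 0 1 :=
  (γ.image_extend_of_subset subset_rfl).symm

theorem pathLen_segment_le (x y : E2) :
    pathLen (Path.segment x y) ≤ ENNReal.ofReal (dist x y) := by
  rw [pathLen_eq_eVariationOn_extend, eVariationOn.eq_of_eqOn (Path.eqOn_extend_segment x y)]
  calc eVariationOn (AffineMap.lineMap x y ∘ id) (Icc (0 : ℝ) 1)
      ≤ nndist x y * eVariationOn id (Icc (0 : ℝ) 1) :=
        ((lipschitzWith_lineMap x y).lipschitzOnWith (s := univ)).comp_eVariationOn_le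
          (mapsTo_univ _ _)
    _ = ENNReal.ofReal (dist x y) := by
        have hid := (monotoneOn_id (s := univ)).eVariationOn_eq (mem_univ (0 : ℝ)) (mem_univ 1)
        simp only [univ_inter, id, sub_zero, ENNReal.ofReal_one] at hid
        rw [hid, mul_one, ← edist_nndist, edist_dist]

theorem pathLen_trans_le {x y z : E2} (γ : Path x y) (γ' : Path y z) :
    pathLen (γ.trans γ') ≤ pathLen γ + pathLen γ' := by
  simp only [pathLen_eq_eVariationOn_extend]
  rw [← eVariationOn_Icc_add_Icc _ (by norm_num : (0 : ℝ) ≤ 1 / 2) (by norm_num : (1 / 2 : ℝ) ≤ 1)]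
  gcongr
  · rw [eVariationOn.eq_of_eqOn (f' := γ.extend ∘ fun u => 2 * u)
      fun u hu => γ.extend_trans_of_le_half γ' hu.2]
    exact eVariationOn.comp_le_of_monotoneOn _ _ (fun u _ v _ huv => by linarith)
      fun u hu => ⟨by linarith [hu.1], by linarith [hu.2]⟩
  · rw [eVariationOn.eq_of_eqOn (f' := γ'.extend ∘ fun u => 2 * u - 1)
      fun u hu => γ.extend_trans_of_half_le γ' hu.1]
    exact eVariationOn.comp_le_of_monotoneOn _ _ (fun u _ v _ huv => by linarith)
      fun u hu => ⟨by linarith [hu.1], by linarith [hu.2]⟩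

theorem pathLen_polygonalPath_le {k : ℕ} (x y : E2) (q : Fin k → E2) :
    pathLen (polygonalPath x y q) ≤ ENNReal.ofReal (polylineLength x q y) := by
  induction k generalizing x with
  | zero => exact pathLen_segment_le x y
  | succ k ih =>
    rw [polylineLength_succ, ENNReal.ofReal_add dist_nonneg (polylineLength_nonneg _ _ _)]
    exact (pathLen_trans_le _ _).trans (add_le_add (pathLen_segment_le _ _) (ih _ _))

end PathLength

theorem VisitsInOrder.trans_cons {x y z : E2} (γ : Path x y) {γ' : Path y z} {k : ℕ} {S : Set E2}
    {P : Fin k → Set E2} (hy : y ∈ S) (h : VisitsInOrder γ' P) :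
    VisitsInOrder (γ.trans γ') (Fin.cons S P : Fin (k + 1) → Set E2) := by
  obtain ⟨q, hq, hmem⟩ := h
  set q₀ : Fin (k + 1) → unitInterval := Fin.cons 0 q
  have hq₀ : Monotone q₀ :=
    monotone_iff_forall_lt.mpr ((Fin.liftFun_cons _).mpr ⟨fun i => (q i).2.1,
      fun _ _ hij => hq hij.le⟩)
  have htrans (u : unitInterval) :
      (γ.trans γ') (projIcc 0 1 zero_le_one ((1 + u) / 2)) = γ' u := by
    change (γ.trans γ').extend _ = _
    rw [Path.extend_trans_of_half_le _ _ (by linarith [u.2.1]),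
      show 2 * ((1 + (u : ℝ)) / 2) - 1 = u by ring, Path.extend_extends']
  refine ⟨fun i => projIcc 0 1 zero_le_one ((1 + q₀ i) / 2),
    fun i j hij => monotone_projIcc _ ?_, Fin.cases ?_ fun i => ?_⟩
  · have : (q₀ i : ℝ) ≤ q₀ j := hq₀ hij
    linarith
  · simpa only [htrans, q₀, Fin.cons_zero, Path.source] using hy
  · simpa only [htrans, q₀, Fin.cons_succ] using hmem i

theorem visitsInOrder_polygonalPath {k : ℕ} {x y : E2} {P : Fin k → Set E2} {q : Fin k → E2}
    (hq : q ∈ univ.pi P) : VisitsInOrder (polygonalPath x y q) P := by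
  induction k generalizing x with
  | zero => exact ⟨finZeroElim, fun i => i.elim0, fun i => i.elim0⟩
  | succ k ih =>
    rw [← Fin.cons_self_tail P]
    exact VisitsInOrder.trans_cons _ (hq 0 trivial) (ih fun i _ => hq i.succ trivial)

section Sampling

variable {s t : E2} (γ : Path s t) {k : ℕ} {q : Fin k → unitInterval}

theorem ofReal_polylineLength_le_pathLen (hq : Monotone q) :
    ENNReal.ofReal (polylineLength s (fun i => γ (q i)) t) ≤ pathLen γ := by
  have h := ofReal_polylineLength_le_eVariationOn γ.extend zero_le_one
    (fun i j hij => hq hij) (τ := fun i => (q i : ℝ)) fun i => (q i).2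
  simpa only [Path.extend_zero, Path.extend_one, Path.extend_extends',
    ← pathLen_eq_eVariationOn_extend] using h

theorem range_eq_polyline_of_pathLen_eq (hq : Monotone q)
    (h : pathLen γ = ENNReal.ofReal (polylineLength s (fun i => γ (q i)) t)) :
    range γ = polyline s (fun i => γ (q i)) t := by
  have himage := image_Icc_eq_polyline_of_eVariationOn_eq zero_le_one (fun i j hij => hq hij)
    (τ := fun i => (q i : ℝ)) (fun i => (q i).2) γ.continuous_extend.continuousOn
  simp only [Path.extend_zero, Path.extend_one, Path.extend_extends',
    ← pathLen_eq_eVariationOn_extend] at himage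
  rw [range_eq_image_extend, himage h]

theorem IsShortestPolyline.ofReal_polylineLength_le_pathLen {P : Fin k → Set E2}
    {c : Fin k → E2} (hc : IsShortestPolyline s t P c) (hγ : VisitsInOrder γ P) :
    ENNReal.ofReal (polylineLength s c t) ≤ pathLen γ := by
  obtain ⟨q, hq, hmem⟩ := hγ
  exact (ENNReal.ofReal_le_ofReal (hc.2 fun i _ => hmem i)).trans
    (_root_.ofReal_polylineLength_le_pathLen γ hq)

theorem VisitsInOrder.exists_isShortestPolyline_range_eq {P : Fin k → Set E2}
    (hγ : VisitsInOrder γ P) {c : Fin k → E2} (hc : IsShortestPolyline s t P c)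
    (hlen : pathLen γ ≤ ENNReal.ofReal (polylineLength s c t)) :
    ∃ c', IsShortestPolyline s t P c' ∧ range γ = polyline s c' t := by
  obtain ⟨q, hq, hmem⟩ := hγ
  have hlow := ofReal_polylineLength_le_pathLen γ hq
  have hc' : polylineLength s (fun i => γ (q i)) t ≤ polylineLength s c t :=
    (ENNReal.ofReal_le_ofReal_iff (polylineLength_nonneg _ _ _)).mp (hlow.trans hlen)
  refine ⟨_, hc.of_polylineLength_le (fun i _ => hmem i) hc', ?_⟩
  refine range_eq_polyline_of_pathLen_eq γ hq (le_antisymm (hlen.trans ?_) hlow)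
  exact ENNReal.ofReal_le_ofReal (hc.2 fun i _ => hmem i)

end Sampling

/-- There is a unique shortest path from `s` to `t` visiting the closed convex sets
`P 1, …, P k` in order: a minimizer exists, and any two minimizers trace out the same
curve. -/
theorem stmt16 (s t : E2) (k : ℕ) (P : Fin k → Set E2)
    (hconv : ∀ i, Convex ℝ (P i)) (hclosed : ∀ i, IsClosed (P i))
    (hne : ∀ i, (P i).Nonempty) :
    ∃ γ : Path s t, VisitsInOrder γ P ∧
      (∀ γ' : Path s t, VisitsInOrder γ' P → pathLen γ ≤ pathLen γ') ∧
      (∀ γ' : Path s t, VisitsInOrder γ' P →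
        (∀ γ'' : Path s t, VisitsInOrder γ'' P → pathLen γ' ≤ pathLen γ'') →
        Set.range γ' = Set.range γ) := by
  obtain ⟨c, hc⟩ := exists_isShortestPolyline s t hclosed hne
  have hvisits := visitsInOrder_polygonalPath (x := s) (y := t) hc.1
  have hshort := pathLen_polygonalPath_le s t c
  refine ⟨polygonalPath s t c, hvisits,
    fun γ hγ => hshort.trans (hc.ofReal_polylineLength_le_pathLen γ hγ),
    fun γ hγ hmin => ?_⟩
  obtain ⟨c₁, hc₁, hrange₁⟩ := hγ.exists_isShortestPolyline_range_eq γ hc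
    ((hmin _ hvisits).trans hshort)
  obtain ⟨c₂, hc₂, hrange₂⟩ := hvisits.exists_isShortestPolyline_range_eq _ hc hshort
  rw [hrange₁, hrange₂, hc₁.polyline_eq hconv hc₂]
end
end
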